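/- Let G be the graph with vertices u1,...,u6 and edges u1u2, u1u3, u1u4, u4u5, u5u6 (the subdivided claw S_{1,1,3}), and let H be the graph with vertices x1,...,x5 and edges x1x2, x1x3, x1x4 (the graph K_{1,3}+P_1). Let ℓ* be the black-and-white labelling of H that colours x2, x3, x4, x5 black and x1 white. Then G contains H^{ℓ*} as a strongly labelled induced subgraph (so G is not strongly H^{ℓ*}-free), yet G is weakly H^{ℓ*}-free. -/

import Mathlib

open SimpleGraph

/-- `B` is the black colour class of a black-and-white labelling of `H`:
every edge of `H` joins a vertex of `B` to a vertex outside `B`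
(equivalently, `B` and its complement `Bᶜ` are both independent sets,
i.e. `(B, Bᶜ)` is a bipartition of `H` into two possibly empty independent sets). -/
def IsBWLabelling {V : Type*} (H : SimpleGraph V) (B : Set V) : Prop :=
  ∀ ⦃u v : V⦄, H.Adj u v → (u ∈ B ↔ v ∉ B)

/-- `H` with black class `BH` is a labelled induced subgraph of `G` with black class `BG`:
there is an injective map preserving both adjacency and non-adjacency which maps
black vertices to black vertices and white vertices to white vertices. -/
def LabelledIndSubgraph {VH VG : Type*} (H : SimpleGraph VH) (BH : Set VH)
    (G : SimpleGraph VG) (BG : Set VG) : Prop :=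
  ∃ f : VH → VG, Function.Injective f ∧
    (∀ u v : VH, H.Adj u v ↔ G.Adj (f u) (f v)) ∧
    (∀ u : VH, u ∈ BH ↔ f u ∈ BG)

/-- `G` is strongly `H^ℓ`-free, where `BH` is the black class of the labelling `ℓ`:
there is no bipartition `(BG, BGᶜ)` of `G` such that `H^ℓ` is a labelled induced
subgraph of `(BG, BGᶜ, E_G)`. -/
def StronglyFree {VG VH : Type*} (G : SimpleGraph VG) (H : SimpleGraph VH)
    (BH : Set VH) : Prop :=
  ¬ ∃ BG : Set VG, IsBWLabelling G BG ∧ LabelledIndSubgraph H BH G BG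

/-- `G` is weakly `H^ℓ`-free, where `BH` is the black class of the labelling `ℓ`:
it is not the case that `H^ℓ` is a labelled induced subgraph of `(BG, BGᶜ, E_G)`
for every bipartition `(BG, BGᶜ)` of `G`. -/
def WeaklyFree {VG VH : Type*} (G : SimpleGraph VG) (H : SimpleGraph VH)
    (BH : Set VH) : Prop :=
  ¬ ∀ BG : Set VG, IsBWLabelling G BG → LabelledIndSubgraph H BH G BG

/-- `G` is `H`-free: `G` contains no induced subgraph isomorphic to `H`. -/
def HFree {VG VH : Type*} (G : SimpleGraph VG) (H : SimpleGraph VH) : Prop :=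
  ¬ ∃ f : VH → VG, Function.Injective f ∧ ∀ u v : VH, H.Adj u v ↔ G.Adj (f u) (f v)

/-- The graph `S_{1,1,3}` on vertices `u1, …, u6` (here `0, …, 5`)
with edges `u1u2, u1u3, u1u4, u4u5, u5u6`. -/
def GS113 : SimpleGraph (Fin 6) :=
  SimpleGraph.fromEdgeSet {s(0, 1), s(0, 2), s(0, 3), s(3, 4), s(4, 5)}

/-- The graph `K_{1,3} + P_1` on vertices `x1, …, x5` (here `0, …, 4`)
with edges `x1x2, x1x3, x1x4`. -/
def HK13P1 : SimpleGraph (Fin 5) :=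
  SimpleGraph.fromEdgeSet {s(0, 1), s(0, 2), s(0, 3)}

/-!
`S_{1,1,3}` is a tree, so its only bipartitions are the classes of vertices at odd and at even
distance from `u1` (below `odd` = `{u2, u3, u4, u6}`, `even` = `{u1, u5}`). Making the odd class
black gives a labelled copy of `K_{1,3} + P_1` with centre `u1`. In the even colouring the only
vertex of degree three, `u1`, is black, whereas a labelled embedding sends the white centre of
the claw to a white vertex of degree at least three.
-/

instance : DecidableRel GS113.Adj := fun u v => decidable_of_iff
  ((s(u, v) = s(0, 1) ∨ s(u, v) = s(0, 2) ∨ s(u, v) = s(0, 3) ∨ s(u, v) = s(3, 4) ∨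
    s(u, v) = s(4, 5)) ∧ u ≠ v)
  (by simp [GS113])

instance : DecidableRel HK13P1.Adj := fun u v => decidable_of_iff
  ((s(u, v) = s(0, 1) ∨ s(u, v) = s(0, 2) ∨ s(u, v) = s(0, 3)) ∧ u ≠ v)
  (by simp [HK13P1])

theorem LabelledIndSubgraph.exists_notMem_degree_le {VH VG : Type*}
    {H : SimpleGraph VH} {BH : Set VH} {G : SimpleGraph VG} {BG : Set VG}
    [H.LocallyFinite] [G.LocallyFinite] (h : LabelledIndSubgraph H BH G BG) {c : VH}
    (hc : c ∉ BH) : ∃ w ∉ BG, H.degree c ≤ G.degree w := by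
  obtain ⟨f, hf, hadj, hcol⟩ := h
  refine ⟨f c, (hcol c).not.mp hc, ?_⟩
  rw [← card_neighborFinset_eq_degree, ← card_neighborFinset_eq_degree]
  refine Finset.card_le_card_of_injOn f (fun v hv => ?_) hf.injOn
  simpa [← hadj] using hv

theorem GS113.isBWLabelling_odd : IsBWLabelling GS113 ({1, 2, 3, 5} : Set (Fin 6)) := by
  unfold IsBWLabelling; decide

theorem GS113.isBWLabelling_even : IsBWLabelling GS113 ({0, 4} : Set (Fin 6)) := by
  unfold IsBWLabelling; decide

theorem HK13P1.labelledIndSubgraph_GS113_odd :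
    LabelledIndSubgraph HK13P1 ({1, 2, 3, 4} : Set (Fin 5)) GS113 ({1, 2, 3, 5} : Set (Fin 6)) :=
  ⟨![0, 1, 2, 3, 5], by decide, by decide, by decide⟩

theorem HK13P1.degree_zero : HK13P1.degree 0 = 3 := by decide

theorem GS113.degree_le_two_of_notMem_even :
    ∀ w ∉ ({0, 4} : Set (Fin 6)), GS113.degree w ≤ 2 := by decide

theorem HK13P1.not_labelledIndSubgraph_GS113_even :
    ¬ LabelledIndSubgraph HK13P1 ({1, 2, 3, 4} : Set (Fin 5)) GS113 ({0, 4} : Set (Fin 6)) := by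
  intro h
  obtain ⟨w, hw, hdeg⟩ := h.exists_notMem_degree_le (c := 0) (by decide)
  have hw_deg := GS113.degree_le_two_of_notMem_even w hw
  rw [HK13P1.degree_zero] at hdeg
  omega

theorem stmt_3 :
    (¬ StronglyFree GS113 HK13P1 ({1, 2, 3, 4} : Set (Fin 5))) ∧
    WeaklyFree GS113 HK13P1 ({1, 2, 3, 4} : Set (Fin 5)) :=
  ⟨fun hfree => hfree ⟨_, GS113.isBWLabelling_odd, HK13P1.labelledIndSubgraph_GS113_odd⟩,
    fun hall => HK13P1.not_labelledIndSubgraph_GS113_even (hall _ GS113.isBWLabelling_even)⟩
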